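/- arXiv:2605.06251 — 2 statements merged into one kernel-verified Lean document; each statement's English description precedes it below -/
import Mathlib

section
/- The binary operation on ℂ ∪ {∞} given by X-spider composition, (w,z) ↦ (wz+1)/(w+z) (undefined/impossible exactly when {w,z} = {1,−1}), with unit ∞, is commutative and associative wherever defined; equivalently, conjugating by z ↦ 1/z turns it into the Lorentz velocity-addition law (w,z) ↦ (w+z)/(1+wz). -/
open scoped Classical

-- The pointed Riemann sphere `ℙ¹_⊥ = ℂ ∪ {∞} ∪ {⊥}` is encoded as
-- `Option (Option ℂ)`: `none = ⊥`, `some none = ∞`, `some (some z) = z ∈ ℂ`.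
/-- X-spider composition on `ℂ ∪ {∞} ∪ {⊥}`: `(w,z) ↦ (wz+1)/(w+z)`, with unit `∞`,
undefined (`⊥`) exactly when `{w,z} = {1,−1}`, and `⊥` absorbing. -/
noncomputable def xSpider : Option (Option ℂ) → Option (Option ℂ) → Option (Option ℂ)
  | none, _ => none
  | _, none => none
  | some none, some b => some b
  | some (some w), some none => some (some w)
  | some (some w), some (some z) =>
      if (w = 1 ∧ z = -1) ∨ (w = -1 ∧ z = 1) then none
      else if w + z = 0 then some none
      else some (some ((w * z + 1) / (w + z)))

lemma xS_bot_mul (x : Option (Option ℂ)) : xSpider none x = none := by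
  rcases x with _ | (_ | w) <;> rfl

lemma xS_mul_bot (x : Option (Option ℂ)) : xSpider x none = none := by
  rcases x with _ | (_ | w) <;> rfl

lemma xS_inf_mul (x : Option (Option ℂ)) : xSpider (some none) x = x := by
  rcases x with _ | (_ | w) <;> rfl

lemma xS_mul_inf (x : Option (Option ℂ)) : xSpider x (some none) = x := by
  rcases x with _ | (_ | w) <;> rfl

lemma xS_comm (a b : Option (Option ℂ)) : xSpider a b = xSpider b a := by
  rcases a with _ | (_ | w) <;> rcases b with _ | (_ | z) <;> try rfl
  simp only [xSpider]
  rw [show z + w = w + z from add_comm z w, show z * w = w * z from mul_comm z w]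
  by_cases h : (w = 1 ∧ z = -1) ∨ (w = -1 ∧ z = 1)
  · rw [if_pos h, if_pos (by tauto)]
  · rw [if_neg h, if_neg (by tauto : ¬((z = 1 ∧ w = -1) ∨ (z = -1 ∧ w = 1)))]

lemma xS_lor (w z : ℂ) (hw : w ≠ 0) (hz : z ≠ 0) (_ : w + z ≠ 0) (hm : w * z + 1 ≠ 0) :
    ((w⁻¹ * z⁻¹ + 1) / (w⁻¹ + z⁻¹))⁻¹ = (w + z) / (1 + w * z) := by
  have h1 : w⁻¹ + z⁻¹ = (w + z) / (w * z) := by field_simp; ring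
  have h2 : w⁻¹ * z⁻¹ + 1 = (1 + w * z) / (w * z) := by field_simp
  rw [h1, h2, div_div_div_comm, div_self (mul_ne_zero hw hz), div_one, inv_div]

lemma xS_key (w z u : ℂ) (h1 : ¬((w = 1 ∧ z = -1) ∨ (w = -1 ∧ z = 1)))
    (h2 : ¬((z = 1 ∧ u = -1) ∨ (z = -1 ∧ u = 1))) :
    xSpider (xSpider (some (some w)) (some (some z))) (some (some u))
      = xSpider (some (some w)) (xSpider (some (some z)) (some (some u))) := by
  by_cases hwz : w + z = 0
  · have e1 : xSpider (some (some w)) (some (some z)) = some none := by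
      simp only [xSpider]; rw [if_neg h1, if_pos hwz]
    rw [e1, xS_inf_mul]
    by_cases hzu : z + u = 0
    · have e2 : xSpider (some (some z)) (some (some u)) = some none := by
        simp only [xSpider]; rw [if_neg h2, if_pos hzu]
      rw [e2, xS_mul_inf, show u = w from by linear_combination hzu - hwz]
    · have hzu' : z + u ≠ 0 := hzu
      have hz1 : z ≠ 1 := by
        rintro rfl; exact h1 (Or.inr ⟨by linear_combination hwz, rfl⟩)
      have hz1' : z ≠ -1 := by
        rintro rfl; exact h1 (Or.inl ⟨by linear_combination hwz, rfl⟩)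
      have e2 : xSpider (some (some z)) (some (some u))
          = some (some ((z * u + 1) / (z + u))) := by
        simp only [xSpider]; rw [if_neg h2, if_neg hzu]
      rw [e2]
      simp only [xSpider]
      have hq : ¬((w = 1 ∧ (z * u + 1) / (z + u) = -1) ∨
          (w = -1 ∧ (z * u + 1) / (z + u) = 1)) := by
        rintro (⟨hw, -⟩ | ⟨hw, -⟩)
        · exact hz1' (by linear_combination hwz - hw)
        · exact hz1 (by linear_combination hwz - hw)
      have hd : w + (z * u + 1) / (z + u) ≠ 0 := by
        intro h
        have h' : w * (z + u) + (z * u + 1) = 0 := by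
          field_simp at h; linear_combination h
        have hz2 : (z - 1) * (z + 1) = 0 := by linear_combination (z + u) * hwz - h'
        rcases mul_eq_zero.mp hz2 with h3 | h3
        · exact hz1 (by linear_combination h3)
        · exact hz1' (by linear_combination h3)
      rw [if_neg hq, if_neg hd]
      congr 2
      symm
      rw [div_eq_iff hd]
      field_simp
      ring_nf
      linear_combination (1 - u ^ 2) * hwz
  · have hwz' : w + z ≠ 0 := hwz
    have e1 : xSpider (some (some w)) (some (some z))
        = some (some ((w * z + 1) / (w + z))) := by
      simp only [xSpider]; rw [if_neg h1, if_neg hwz]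
    rw [e1]
    by_cases hzu : z + u = 0
    · have e2 : xSpider (some (some z)) (some (some u)) = some none := by
        simp only [xSpider]; rw [if_neg h2, if_pos hzu]
      rw [e2, xS_mul_inf]
      have hz1 : z ≠ 1 := by
        rintro rfl; exact h2 (Or.inl ⟨rfl, by linear_combination hzu⟩)
      have hz1' : z ≠ -1 := by
        rintro rfl; exact h2 (Or.inr ⟨rfl, by linear_combination hzu⟩)
      simp only [xSpider]
      have hq : ¬(((w * z + 1) / (w + z) = 1 ∧ u = -1) ∨
          ((w * z + 1) / (w + z) = -1 ∧ u = 1)) := by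
        rintro (⟨-, hu⟩ | ⟨-, hu⟩)
        · exact hz1 (by linear_combination hzu - hu)
        · exact hz1' (by linear_combination hzu - hu)
      have hd : (w * z + 1) / (w + z) + u ≠ 0 := by
        intro h
        have h' : (w * z + 1) + u * (w + z) = 0 := by
          field_simp at h; linear_combination h
        have hz2 : (z - 1) * (z + 1) = 0 := by linear_combination (w + z) * hzu - h'
        rcases mul_eq_zero.mp hz2 with h3 | h3
        · exact hz1 (by linear_combination h3)
        · exact hz1' (by linear_combination h3)
      rw [if_neg hq, if_neg hd]
      congr 2
      rw [div_eq_iff hd]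
      field_simp
      ring_nf
      linear_combination (1 - w ^ 2) * hzu
    · have hzu' : z + u ≠ 0 := hzu
      have e2 : xSpider (some (some z)) (some (some u))
          = some (some ((z * u + 1) / (z + u))) := by
        simp only [xSpider]; rw [if_neg h2, if_neg hzu]
      rw [e2]
      simp only [xSpider]
      by_cases hc : ((w * z + 1) / (w + z) = 1 ∧ u = -1) ∨
          ((w * z + 1) / (w + z) = -1 ∧ u = 1)
      · rw [if_pos hc]
        rcases hc with ⟨hp, hu⟩ | ⟨hp, hu⟩
        · subst hu
          rw [div_eq_iff hwz'] at hp
          have hz : z ≠ 1 := by intro h; apply hzu; rw [h]; ring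
          have hw : w = 1 := by
            have h3 : (w - 1) * (z - 1) = 0 := by linear_combination hp
            rcases mul_eq_zero.mp h3 with h4 | h4
            · linear_combination h4
            · exact absurd (by linear_combination h4) hz
          have hq : (z * (-1 : ℂ) + 1) / (z + -1) = -1 := by
            rw [div_eq_iff hzu']; ring
          rw [if_pos (Or.inl ⟨hw, hq⟩)]
        · subst hu
          rw [div_eq_iff hwz'] at hp
          have hz : z ≠ -1 := by intro h; apply hzu; rw [h]; ring
          have hw : w = -1 := by
            have h3 : (w + 1) * (z + 1) = 0 := by linear_combination hp
            rcases mul_eq_zero.mp h3 with h4 | h4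
            · linear_combination h4
            · exact absurd (by linear_combination h4) hz
          have hq : (z * (1 : ℂ) + 1) / (z + 1) = 1 := by
            rw [div_eq_iff hzu']; ring
          rw [if_pos (Or.inr ⟨hw, hq⟩)]
      · rw [if_neg hc]
        have hcR : ¬ ((w = 1 ∧ (z * u + 1) / (z + u) = -1) ∨
            (w = -1 ∧ (z * u + 1) / (z + u) = 1)) := by
          rintro (⟨hw, hq⟩ | ⟨hw, hq⟩)
          · rw [div_eq_iff hzu'] at hq
            have hz : z ≠ -1 := by rintro rfl; exact h1 (Or.inl ⟨hw, rfl⟩)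
            have hu : u = -1 := by
              have h3 : (z + 1) * (u + 1) = 0 := by linear_combination hq
              rcases mul_eq_zero.mp h3 with h4 | h4
              · exact absurd (by linear_combination h4) hz
              · linear_combination h4
            apply hc; left
            refine ⟨?_, hu⟩
            rw [div_eq_iff hwz', hw]; ring
          · rw [div_eq_iff hzu'] at hq
            have hz : z ≠ 1 := by rintro rfl; exact h1 (Or.inr ⟨hw, rfl⟩)
            have hu : u = 1 := by
              have h3 : (z - 1) * (u - 1) = 0 := by linear_combination hq
              rcases mul_eq_zero.mp h3 with h4 | h4
              · exact absurd (by linear_combination h4) hz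
              · linear_combination h4
            apply hc; right
            refine ⟨?_, hu⟩
            rw [div_eq_iff hwz', hw]; ring
        rw [if_neg hcR]
        by_cases hN : w * z + w * u + z * u + 1 = 0
        · have hpu : (w * z + 1) / (w + z) + u = 0 := by
            rw [div_add' _ _ _ hwz', div_eq_zero_iff]; left; linear_combination hN
          have hwq : w + (z * u + 1) / (z + u) = 0 := by
            rw [add_div' _ _ _ hzu', div_eq_zero_iff]; left; linear_combination hN
          rw [if_pos hpu, if_pos hwq]
        · have hpu : ¬ ((w * z + 1) / (w + z) + u = 0) := by
            rw [div_add' _ _ _ hwz', div_eq_zero_iff]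
            rintro (h | h)
            · exact hN (by linear_combination h)
            · exact hwz' h
          have hwq : ¬ (w + (z * u + 1) / (z + u) = 0) := by
            rw [add_div' _ _ _ hzu', div_eq_zero_iff]
            rintro (h | h)
            · exact hN (by linear_combination h)
            · exact hzu' h
          rw [if_neg hpu, if_neg hwq]
          congr 2
          have hN1 : w * z + 1 + u * (w + z) ≠ 0 := fun h => hN (by linear_combination h)
          have hN2 : w * (z + u) + (z * u + 1) ≠ 0 := fun h => hN (by linear_combination h)
          rw [div_mul_eq_mul_div, div_add' _ _ _ hwz', div_add' _ _ _ hwz',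
            div_div_div_comm, div_self hwz', div_one]
          rw [mul_div_assoc' w _ _, div_add' _ _ _ hzu', add_div' _ _ _ hzu',
            div_div_div_comm, div_self hzu', div_one]
          rw [div_eq_div_iff hN1 hN2]
          ring

/-- X-spider composition is commutative, associative wherever the intermediate
results are defined, and conjugating by `z ↦ 1/z` turns it into the Lorentz
velocity-addition law `(w,z) ↦ (w+z)/(1+wz)`. -/
theorem stmt_7 :
    (∀ a b : Option (Option ℂ), xSpider a b = xSpider b a) ∧
    (∀ a b c : Option (Option ℂ), xSpider a b ≠ none → xSpider b c ≠ none →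
      xSpider (xSpider a b) c = xSpider a (xSpider b c)) ∧
    (∀ w z : ℂ, w ≠ 0 → z ≠ 0 → w + z ≠ 0 → w * z + 1 ≠ 0 →
      ((w⁻¹ * z⁻¹ + 1) / (w⁻¹ + z⁻¹))⁻¹ = (w + z) / (1 + w * z)) := by
  refine ⟨xS_comm, ?_, xS_lor⟩
  intro a b c hab hbc
  rcases a with _ | (_ | w)
  · exact absurd (xS_bot_mul b) hab
  · rw [xS_inf_mul, xS_inf_mul]
  · rcases b with _ | (_ | z)
    · exact absurd (xS_mul_bot (some (some w))) hab
    · rw [xS_mul_inf, xS_inf_mul]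
    · rcases c with _ | (_ | u)
      · exact absurd (xS_mul_bot (some (some z))) hbc
      · rw [xS_mul_inf, xS_mul_inf]
      · have h1 : ¬((w = 1 ∧ z = -1) ∨ (w = -1 ∧ z = 1)) := by
          intro hcond; exact hab (by simp [xSpider, hcond])
        have h2 : ¬((z = 1 ∧ u = -1) ∨ (z = -1 ∧ u = 1)) := by
          intro hcond; exact hbc (by simp [xSpider, hcond])
        exact xS_key w z u h1 h2
end

section
/- The points z = 1 ± √2 and z = −1 ± √2 (roots of (z²−2z−1)(z²+2z−1)) are fixed points of f(z) = (z⁷ + 7z³)/(7z⁴ + 1), but f′ does not vanish at any of them. -/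
/-!
Writing `f(z) = N(z)/D(z)` with `N = z⁷ + 7z³`, `D = 7z⁴ + 1`, one has
`N - zD = z(z² - 1)(z⁴ - 6z² + 1)` and `N'D - ND' = 21 z² (z⁴ - 1)²`.
The four points are exactly the roots of `z⁴ - 6z² + 1 = (z² - 2z - 1)(z² + 2z - 1)`,
so they are fixed points, while the critical points of `f` are only `0` and the fourth
roots of unity.
-/

def steaneDecoder {𝕜 : Type*} [Field 𝕜] (z : 𝕜) : 𝕜 :=
  (z ^ 7 + 7 * z ^ 3) / (7 * z ^ 4 + 1)

section Algebra

variable {𝕜 : Type*} [Field 𝕜] {z : 𝕜}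

theorem quartic_eq_zero_of_sq_eq_two {s : 𝕜} (hs : s ^ 2 = 2)
    (hz : z = 1 + s ∨ z = 1 - s ∨ z = -1 + s ∨ z = -1 - s) :
    z ^ 4 - 6 * z ^ 2 + 1 = 0 := by
  rcases hz with rfl | rfl | rfl | rfl
  · linear_combination ((1 + s) ^ 2 + 2 * (1 + s) - 1) * hs
  · linear_combination ((1 - s) ^ 2 + 2 * (1 - s) - 1) * hs
  · linear_combination ((-1 + s) ^ 2 - 2 * (-1 + s) - 1) * hs
  · linear_combination ((-1 - s) ^ 2 - 2 * (-1 - s) - 1) * hs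

theorem steaneDecoder_sub_self (hD : 7 * z ^ 4 + 1 ≠ 0) :
    steaneDecoder z - z = z * (z ^ 2 - 1) * (z ^ 4 - 6 * z ^ 2 + 1) / (7 * z ^ 4 + 1) := by
  rw [steaneDecoder, eq_div_iff hD, sub_mul, div_mul_cancel₀ _ hD]
  ring

variable [CharZero 𝕜]

theorem steane_denom_ne_zero_of_quartic_eq_zero (hz : z ^ 4 - 6 * z ^ 2 + 1 = 0) :
    7 * z ^ 4 + 1 ≠ 0 := by
  intro hD
  have hz2 : z ^ 2 = 1 / 7 := by linear_combination (-(1 : 𝕜) / 42) * (7 * hz - hD)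
  have : (8 : 𝕜) / 7 = 0 := by linear_combination hD - 7 * (z ^ 2 + 1 / 7) * hz2
  norm_num at this

theorem steaneDecoder_eq_self_of_quartic_eq_zero (hz : z ^ 4 - 6 * z ^ 2 + 1 = 0) :
    steaneDecoder z = z := by
  have h := steaneDecoder_sub_self (steane_denom_ne_zero_of_quartic_eq_zero hz)
  rwa [hz, mul_zero, zero_div, sub_eq_zero] at h

theorem steane_critical_numerator_ne_zero (hz : z ^ 4 - 6 * z ^ 2 + 1 = 0) :
    21 * z ^ 2 * (z ^ 4 - 1) ^ 2 ≠ 0 := by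
  have hz0 : z ≠ 0 := by rintro rfl; norm_num at hz
  have hz4 : z ^ 4 - 1 ≠ 0 := by
    intro h
    have hz2 : z ^ 2 = 1 / 3 := by linear_combination (-(1 : 𝕜) / 6) * (hz - h)
    have : (-8 : 𝕜) / 9 = 0 := by linear_combination h - (z ^ 2 + 1 / 3) * hz2
    norm_num at this
  exact mul_ne_zero (mul_ne_zero (by norm_num) (pow_ne_zero 2 hz0)) (pow_ne_zero 2 hz4)

end Algebra

section Derivative

variable {𝕜 : Type*} [NontriviallyNormedField 𝕜] {z : 𝕜}

theorem hasDerivAt_steaneDecoder (hD : 7 * z ^ 4 + 1 ≠ 0) :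
    HasDerivAt steaneDecoder (21 * z ^ 2 * (z ^ 4 - 1) ^ 2 / (7 * z ^ 4 + 1) ^ 2) z := by
  have hN : HasDerivAt (fun z : 𝕜 => z ^ 7 + 7 * z ^ 3) _ z :=
    (hasDerivAt_pow 7 z).add ((hasDerivAt_pow 3 z).const_mul 7)
  have hD' : HasDerivAt (fun z : 𝕜 => 7 * z ^ 4 + 1) _ z :=
    ((hasDerivAt_pow 4 z).const_mul 7).add_const 1
  have h : HasDerivAt steaneDecoder _ z := hN.div hD' hD
  convert h using 1
  push_cast
  ring

theorem deriv_steaneDecoder_ne_zero [CharZero 𝕜] (hz : z ^ 4 - 6 * z ^ 2 + 1 = 0) :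
    deriv steaneDecoder z ≠ 0 := by
  have hD := steane_denom_ne_zero_of_quartic_eq_zero hz
  rw [(hasDerivAt_steaneDecoder hD).deriv]
  exact div_ne_zero (steane_critical_numerator_ne_zero hz) (pow_ne_zero 2 hD)

end Derivative

/-- The points `z = 1 ± √2` and `z = −1 ± √2` (the roots of
`(z²−2z−1)(z²+2z−1)`) are fixed points of the Steane decoder
`f(z) = (z⁷ + 7z³)/(7z⁴ + 1)`, but `f′` does not vanish at any of them. -/
theorem stmt_16 : ∀ z : ℂ,
    (z = 1 + (Real.sqrt 2 : ℂ) ∨ z = 1 - (Real.sqrt 2 : ℂ) ∨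
     z = -1 + (Real.sqrt 2 : ℂ) ∨ z = -1 - (Real.sqrt 2 : ℂ)) →
    (z ^ 7 + 7 * z ^ 3) / (7 * z ^ 4 + 1) = z ∧
    deriv (fun z : ℂ => (z ^ 7 + 7 * z ^ 3) / (7 * z ^ 4 + 1)) z ≠ 0 := by
  intro z hz
  have hsqrt : (Real.sqrt 2 : ℂ) ^ 2 = 2 := by
    exact_mod_cast congrArg Complex.ofReal (Real.sq_sqrt zero_le_two)
  have hquartic := quartic_eq_zero_of_sq_eq_two hsqrt hz
  exact ⟨steaneDecoder_eq_self_of_quartic_eq_zero hquartic,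
    deriv_steaneDecoder_ne_zero hquartic⟩
end
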